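/- arXiv:2203.06626 — 4 statements merged into one kernel-verified Lean document; each statement's English description precedes it below -/
import Mathlib

section
/- Let m>0. For every measurable v : (0,∞)×ℝ² → ℝ with ∫₀^∞ ∫_{ℝ²} v(t,k)² dk dt < ∞, one has ∫_{ℝ²} (m²+|k|²) · ( ∫₀^∞ t^{-1} e^{-(m²+|k|²)/(2t)} |v(t,k)| dt )² dk ≤ ∫₀^∞ ∫_{ℝ²} v(t,k)² dk dt. -/
open MeasureTheory Real Set

lemma kernel_facts {a : ℝ} (ha : 0 < a) :
    IntegrableOn (fun t : ℝ => (t⁻¹ * Real.exp (-a / (2 * t))) ^ 2) (Ioi 0) ∧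
    ∫ t in Ioi (0:ℝ), (t⁻¹ * Real.exp (-a / (2 * t))) ^ 2 = a⁻¹ := by
  set g : ℝ → ℝ := fun t => if t ≤ 0 then 0 else Real.exp (-a / t) with hg
  set g' : ℝ → ℝ := fun t => a * ((t⁻¹ * Real.exp (-a / (2 * t))) ^ 2) with hg'
  have hderiv : ∀ x ∈ Ioi (0:ℝ), HasDerivAt g (g' x) x := by
    intro x hx
    have hx0 : (0:ℝ) < x := hx
    have h1 : HasDerivAt (fun t : ℝ => -a * t⁻¹) (-a * -(x ^ 2)⁻¹) x :=
      (hasDerivAt_inv hx0.ne').const_mul (-a)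
    have h2 : HasDerivAt (fun t : ℝ => Real.exp (-a * t⁻¹))
        (Real.exp (-a * x⁻¹) * (-a * -(x ^ 2)⁻¹)) x := h1.exp
    have heq : g =ᶠ[nhds x] fun t : ℝ => Real.exp (-a * t⁻¹) := by
      filter_upwards [isOpen_Ioi.mem_nhds hx] with t ht
      simp [hg, not_le.2 (show (0:ℝ) < t from ht), div_eq_mul_inv]
    have h3 : HasDerivAt g (Real.exp (-a * x⁻¹) * (-a * -(x ^ 2)⁻¹)) x :=
      h2.congr_of_eventuallyEq heq
    convert h3 using 1
    have hexp : Real.exp (-a / (2 * x)) ^ 2 = Real.exp (-a * x⁻¹) := by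
      rw [← Real.exp_nat_mul]
      congr 1
      field_simp
      ring
    simp only [hg', mul_pow, hexp]
    field_simp
  have hpos : ∀ x ∈ Ioi (0:ℝ), 0 ≤ g' x := by
    intro x hx; exact mul_nonneg ha.le (sq_nonneg _)
  have hcont : ContinuousWithinAt g (Ici 0) 0 := by
    have h0 : g 0 = 0 := by simp [hg]
    rw [ContinuousWithinAt, h0]
    have hbound : ∀ t ∈ Ici (0:ℝ), g t ≤ a⁻¹ * t := by
      intro t ht
      rcases eq_or_lt_of_le (Set.mem_Ici.mp ht) with h | h
      · simp [hg, ← h]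
      · have h1 : a / t ≤ Real.exp (a / t) := by
          have := Real.add_one_le_exp (a / t); linarith
        have h2 : Real.exp (-a / t) = (Real.exp (a / t))⁻¹ := by
          rw [← Real.exp_neg]; ring_nf
        have hat : 0 < a / t := div_pos ha h
        have h3 : (Real.exp (a / t))⁻¹ ≤ (a / t)⁻¹ := by
          apply inv_anti₀ hat h1
        have : g t = Real.exp (-a / t) := by simp [hg, not_le.2 h]
        rw [this, h2]
        calc (Real.exp (a / t))⁻¹ ≤ (a / t)⁻¹ := h3
          _ = a⁻¹ * t := by field_simp
    have hnn : ∀ t ∈ Ici (0:ℝ), 0 ≤ g t := by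
      intro t ht
      by_cases h : t ≤ 0
      · simp [hg, h]
      · simp only [hg, if_neg h]; positivity
    have hb1 : ∀ᶠ t in nhdsWithin (0:ℝ) (Ici 0), ‖g t‖ ≤ a⁻¹ * t := by
      filter_upwards [self_mem_nhdsWithin] with t ht
      rw [Real.norm_of_nonneg (hnn t ht)]
      exact hbound t ht
    have hb2 : Filter.Tendsto (fun t : ℝ => a⁻¹ * t) (nhdsWithin 0 (Ici 0)) (nhds 0) := by
      have : Filter.Tendsto (fun t : ℝ => a⁻¹ * t) (nhdsWithin 0 (Ici 0)) (nhds (a⁻¹ * 0)) :=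
        (continuous_const.mul continuous_id).continuousAt.continuousWithinAt
      simpa using this
    exact squeeze_zero_norm' hb1 hb2
  have htend : Filter.Tendsto g Filter.atTop (nhds 1) := by
    have h1 : Filter.Tendsto (fun t : ℝ => -a / t) Filter.atTop (nhds 0) :=
      tendsto_const_nhds.div_atTop Filter.tendsto_id
    have h2 : Filter.Tendsto (fun t : ℝ => Real.exp (-a / t)) Filter.atTop (nhds 1) := by
      have := (Real.continuous_exp.tendsto 0).comp h1
      simpa [Function.comp_def] using this
    apply h2.congr'
    filter_upwards [Filter.eventually_gt_atTop 0] with t ht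
    simp [hg, not_le.2 ht]
  have hInt : IntegrableOn g' (Ioi 0) :=
    integrableOn_Ioi_deriv_of_nonneg hcont hderiv hpos htend
  have hval : ∫ x in Ioi (0:ℝ), g' x = 1 := by
    rw [integral_Ioi_of_hasDerivAt_of_nonneg hcont hderiv hpos htend]
    simp [hg]
  constructor
  · have h1 : IntegrableOn (fun t => a⁻¹ * g' t) (Ioi 0) := hInt.const_mul a⁻¹
    refine h1.congr_fun (fun t ht => ?_) measurableSet_Ioi
    simp only [hg']
    rw [inv_mul_cancel_left₀ ha.ne']
  · have : ∫ t in Ioi (0:ℝ), (t⁻¹ * Real.exp (-a / (2 * t))) ^ 2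
        = ∫ t in Ioi (0:ℝ), a⁻¹ * g' t := by
      apply setIntegral_congr_fun measurableSet_Ioi
      intro t ht
      simp only [hg']
      rw [inv_mul_cancel_left₀ ha.ne']
    rw [this, integral_const_mul, hval, mul_one]

lemma cs_step {a : ℝ} (ha : 0 < a) {w : ℝ → ℝ} (hw : Measurable w)
    (hI : IntegrableOn (fun t => w t ^ 2) (Ioi 0)) :
    a * (∫ t in Ioi (0:ℝ), t⁻¹ * Real.exp (-a / (2 * t)) * |w t|) ^ 2
      ≤ ∫ t in Ioi (0:ℝ), w t ^ 2 := by
  set f₁ : ℝ → ℝ := fun t => t⁻¹ * Real.exp (-a / (2 * t)) with hf₁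
  have hmf₁ : Measurable f₁ := by
    apply measurable_inv.mul
    exact Real.measurable_exp.comp (measurable_const.div (measurable_const.mul measurable_id))
  have htwo : (2:ℝ).HolderConjugate 2 := by constructor <;> norm_num
  have h2 : ENNReal.ofReal (2:ℝ) = 2 := by norm_num
  have hmem₁ : MemLp f₁ (ENNReal.ofReal 2) (volume.restrict (Ioi 0)) := by
    rw [h2, memLp_two_iff_integrable_sq hmf₁.aestronglyMeasurable]
    exact (kernel_facts ha).1
  have hmem₂ : MemLp (fun t => |w t|) (ENNReal.ofReal 2) (volume.restrict (Ioi 0)) := by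
    rw [h2, memLp_two_iff_integrable_sq hw.abs.aestronglyMeasurable]
    simpa [sq_abs, IntegrableOn] using hI
  have hf₁nn : 0 ≤ᵐ[volume.restrict (Ioi 0)] f₁ := by
    filter_upwards [ae_restrict_mem measurableSet_Ioi] with t ht
    have : (0:ℝ) < t := ht
    positivity
  have hwnn : 0 ≤ᵐ[volume.restrict (Ioi 0)] fun t => |w t| :=
    Filter.Eventually.of_forall fun t => abs_nonneg _
  have hCS := integral_mul_le_Lp_mul_Lq_of_nonneg htwo hf₁nn hwnn hmem₁ hmem₂
  have hrpow : ∀ x : ℝ, x ^ (2:ℝ) = x ^ 2 := fun x => by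
    rw [show (2:ℝ) = ((2:ℕ):ℝ) by norm_num, Real.rpow_natCast]
  simp only [hrpow] at hCS
  have hA : (0:ℝ) ≤ ∫ t in Ioi (0:ℝ), f₁ t ^ 2 :=
    integral_nonneg fun t => sq_nonneg _
  have hB : (0:ℝ) ≤ ∫ t in Ioi (0:ℝ), |w t| ^ 2 :=
    integral_nonneg fun t => sq_nonneg _
  have hL : (0:ℝ) ≤ ∫ t in Ioi (0:ℝ), f₁ t * |w t| :=
    integral_nonneg_of_ae (by filter_upwards [hf₁nn] with t ht; exact mul_nonneg ht (abs_nonneg _))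
  have hsq : (∫ t in Ioi (0:ℝ), f₁ t * |w t|) ^ 2
      ≤ (∫ t in Ioi (0:ℝ), f₁ t ^ 2) * ∫ t in Ioi (0:ℝ), |w t| ^ 2 := by
    calc (∫ t in Ioi (0:ℝ), f₁ t * |w t|) ^ 2
        ≤ ((∫ t in Ioi (0:ℝ), f₁ t ^ 2) ^ (1/2:ℝ) * (∫ t in Ioi (0:ℝ), |w t| ^ 2) ^ (1/2:ℝ)) ^ 2 :=
          pow_le_pow_left₀ hL hCS 2
      _ = (∫ t in Ioi (0:ℝ), f₁ t ^ 2) * ∫ t in Ioi (0:ℝ), |w t| ^ 2 := by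
          rw [mul_pow, ← Real.rpow_natCast ((∫ t in Ioi (0:ℝ), f₁ t ^ 2) ^ (1/2:ℝ)) 2,
            ← Real.rpow_natCast ((∫ t in Ioi (0:ℝ), |w t| ^ 2) ^ (1/2:ℝ)) 2,
            ← Real.rpow_mul hA, ← Real.rpow_mul hB]
          norm_num
  have hk : ∫ t in Ioi (0:ℝ), f₁ t ^ 2 = a⁻¹ := (kernel_facts ha).2
  have habs : ∫ t in Ioi (0:ℝ), |w t| ^ 2 = ∫ t in Ioi (0:ℝ), w t ^ 2 := by
    simp [sq_abs]
  rw [hk, habs] at hsq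
  calc a * (∫ t in Ioi (0:ℝ), t⁻¹ * Real.exp (-a / (2 * t)) * |w t|) ^ 2
      ≤ a * (a⁻¹ * ∫ t in Ioi (0:ℝ), w t ^ 2) := by
        apply mul_le_mul_of_nonneg_left _ ha.le
        exact hsq
    _ = ∫ t in Ioi (0:ℝ), w t ^ 2 := by field_simp

/-- Fourier form of the energy estimate
`‖(m²−Δ)^{1/2} I_∞(u)‖²_{L²} ≤ ∫₀^∞ ‖u_s‖²_{L²} ds`. -/
theorem fourier_energy_estimate (m : ℝ) (hm : 0 < m)
    (v : ℝ → EuclideanSpace ℝ (Fin 2) → ℝ)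
    (hv : Measurable (Function.uncurry v))
    (hint : Integrable (fun p : ℝ × EuclideanSpace ℝ (Fin 2) => (v p.1 p.2) ^ 2)
      ((volume.restrict (Ioi (0:ℝ))).prod volume)) :
    ∫ k : EuclideanSpace ℝ (Fin 2),
        (m ^ 2 + ‖k‖ ^ 2) *
          (∫ t in Ioi (0:ℝ), t⁻¹ * Real.exp (-(m ^ 2 + ‖k‖ ^ 2) / (2 * t)) * |v t k|) ^ 2
      ≤ ∫ t in Ioi (0:ℝ), ∫ k : EuclideanSpace ℝ (Fin 2), (v t k) ^ 2 := by
  have ha : ∀ k : EuclideanSpace ℝ (Fin 2), 0 < m ^ 2 + ‖k‖ ^ 2 := fun k => by positivity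
  set F : EuclideanSpace ℝ (Fin 2) → ℝ := fun k => (m ^ 2 + ‖k‖ ^ 2) *
    (∫ t in Ioi (0:ℝ), t⁻¹ * Real.exp (-(m ^ 2 + ‖k‖ ^ 2) / (2 * t)) * |v t k|) ^ 2 with hF
  set G : EuclideanSpace ℝ (Fin 2) → ℝ := fun k => ∫ t in Ioi (0:ℝ), v t k ^ 2 with hG
  -- measurability of F
  have hmw : Measurable (fun p : EuclideanSpace ℝ (Fin 2) × ℝ =>
      p.2⁻¹ * Real.exp (-(m ^ 2 + ‖p.1‖ ^ 2) / (2 * p.2)) * |v p.2 p.1|) := by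
    apply Measurable.mul
    · apply Measurable.mul
      · exact measurable_snd.inv
      · apply Real.measurable_exp.comp
        apply Measurable.div
        · exact ((measurable_const.add ((measurable_norm.comp measurable_fst).pow_const 2))).neg
        · exact measurable_const.mul measurable_snd
    · exact (hv.comp' (measurable_snd.prodMk measurable_fst)).abs
  have hImeas : StronglyMeasurable (fun k : EuclideanSpace ℝ (Fin 2) =>
      ∫ t in Ioi (0:ℝ), t⁻¹ * Real.exp (-(m ^ 2 + ‖k‖ ^ 2) / (2 * t)) * |v t k|) :=
    hmw.stronglyMeasurable.integral_prod_right'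
  have hFmeas : AEStronglyMeasurable F volume := by
    apply Measurable.aestronglyMeasurable
    exact (measurable_const.add (measurable_norm.pow_const 2)).mul
      (hImeas.measurable.pow_const 2)
  -- integrability of G
  have hGint : Integrable G volume := by
    have := hint.integral_prod_right
    simpa using this
  -- a.e. fibre integrability
  have haefib : ∀ᵐ k : EuclideanSpace ℝ (Fin 2),
      IntegrableOn (fun t => v t k ^ 2) (Ioi 0) := by
    have := hint.prod_left_ae
    simpa [IntegrableOn] using this
  -- pointwise bound F ≤ G a.e.
  have hbound : ∀ᵐ k : EuclideanSpace ℝ (Fin 2), F k ≤ G k := by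
    filter_upwards [haefib] with k hk
    have hwk : Measurable fun t => v t k :=
      hv.comp' (measurable_id.prodMk measurable_const)
    exact cs_step (ha k) hwk hk
  have hFnn : ∀ k : EuclideanSpace ℝ (Fin 2), 0 ≤ F k :=
    fun k => mul_nonneg (ha k).le (sq_nonneg _)
  have hFint : Integrable F volume := by
    apply hGint.mono' hFmeas
    filter_upwards [hbound] with k hk
    rwa [Real.norm_of_nonneg (hFnn k)]
  have h1 : ∫ k, F k ≤ ∫ k, G k := integral_mono_ae hFint hGint hbound
  have h2 : ∫ k, G k = ∫ t in Ioi (0:ℝ), ∫ k : EuclideanSpace ℝ (Fin 2), v t k ^ 2 :=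
    (integral_integral_swap hint).symm
  rw [← h2]
  exact h1
end

section
/- Let γ > 0. There exist δ ∈ (0,1) and, for every B > 0, a constant C > 0 such that the following holds. For all continuously differentiable functions f¹, f², g : ℝ² → ℝ with ‖f¹‖_{L^∞} + ‖∇f¹‖_{L^∞} ≤ B and ‖f²‖_{L^∞} + ‖∇f²‖_{L^∞} ≤ B, one has ∫_{ℝ²} e^{γ|x|} ( | (cos(f¹(x)+g(x)) − cos(f²(x)+g(x))) g(x) | + | ∇( (cos(f¹+g) − cos(f²+g)) g )(x) | ) dx ≤ C ( N₁ · N_g + N₀^δ · N_g² ), where N₀ = (∫ e^{−2γ|x|} (f¹−f²)² dx)^{1/2}, N₁ = (∫ e^{−2γ|x|} ((f¹−f²)² + |∇(f¹−f²)|²) dx)^{1/2}, and N_g = (∫ e^{4γ|x|} (g² + |∇g|²) dx)^{1/2} (all assumed finite). -/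
open MeasureTheory Real Set

open Metric

local notation "E2" => EuclideanSpace ℝ (Fin 2)




lemma my_abs_cos_sub_cos (a b : ℝ) : |Real.cos a - Real.cos b| ≤ |a - b| := by
  rw [Real.cos_sub_cos]
  have h1 : |Real.sin ((a + b) / 2)| ≤ 1 := Real.abs_sin_le_one _
  have h2 : |Real.sin ((a - b) / 2)| ≤ |(a - b) / 2| := Real.abs_sin_le_abs
  calc |-2 * Real.sin ((a + b) / 2) * Real.sin ((a - b) / 2)|
      = 2 * |Real.sin ((a + b) / 2)| * |Real.sin ((a - b) / 2)| := by
        rw [abs_mul, abs_mul]; norm_num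
    _ ≤ 2 * 1 * |(a - b) / 2| := by
        apply mul_le_mul _ h2 (abs_nonneg _) (by norm_num)
        nlinarith [abs_nonneg (Real.sin ((a+b)/2))]
    _ = |a - b| := by rw [abs_div, abs_two]; ring

lemma my_abs_sin_sub_sin (a b : ℝ) : |Real.sin a - Real.sin b| ≤ |a - b| := by
  rw [Real.sin_sub_sin]
  have h1 : |Real.cos ((a + b) / 2)| ≤ 1 := Real.abs_cos_le_one _
  have h2 : |Real.sin ((a - b) / 2)| ≤ |(a - b) / 2| := Real.abs_sin_le_abs
  calc |2 * Real.sin ((a - b) / 2) * Real.cos ((a + b) / 2)|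
      = 2 * |Real.sin ((a - b) / 2)| * |Real.cos ((a + b) / 2)| := by
        rw [abs_mul, abs_mul]; norm_num
    _ ≤ 2 * |(a - b) / 2| * 1 := by
        apply mul_le_mul (by nlinarith [abs_nonneg (Real.sin ((a-b)/2))]) h1
          (abs_nonneg _) (by positivity)
    _ = |a - b| := by rw [abs_div, abs_two]; ring

/-- Cauchy–Schwarz for integrals of nonnegative functions. -/
lemma my_cs {α : Type*} [MeasurableSpace α] {μ : Measure α} {u v : α → ℝ}
    (hu : AEStronglyMeasurable u μ) (hv : AEStronglyMeasurable v μ)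
    (hu0 : ∀ x, 0 ≤ u x) (hv0 : ∀ x, 0 ≤ v x)
    (hu2 : Integrable (fun x => u x ^ 2) μ) (hv2 : Integrable (fun x => v x ^ 2) μ) :
    ∫ x, u x * v x ∂μ ≤ Real.sqrt (∫ x, u x ^ 2 ∂μ) * Real.sqrt (∫ x, v x ^ 2 ∂μ) := by
  have hpq : Real.HolderConjugate 2 2 := Real.HolderConjugate.two_two
  have hmu : MemLp u (ENNReal.ofReal 2) μ := by
    rw [show ENNReal.ofReal 2 = 2 by norm_num]
    exact (memLp_two_iff_integrable_sq hu).2 hu2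
  have hmv : MemLp v (ENNReal.ofReal 2) μ := by
    rw [show ENNReal.ofReal 2 = 2 by norm_num]
    exact (memLp_two_iff_integrable_sq hv).2 hv2
  have h := MeasureTheory.integral_mul_le_Lp_mul_Lq_of_nonneg hpq
    (Filter.Eventually.of_forall hu0) (Filter.Eventually.of_forall hv0) hmu hmv
  have e1 : ∫ a, u a ^ (2:ℝ) ∂μ = ∫ a, u a ^ 2 ∂μ := by
    refine integral_congr_ae (Filter.Eventually.of_forall fun a => ?_)
    norm_num [Real.rpow_natCast]
  have e2 : ∫ a, v a ^ (2:ℝ) ∂μ = ∫ a, v a ^ 2 ∂μ := by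
    refine integral_congr_ae (Filter.Eventually.of_forall fun a => ?_)
    norm_num [Real.rpow_natCast]
  rw [e1, e2] at h
  rw [Real.sqrt_eq_rpow, Real.sqrt_eq_rpow]; exact h

/-- Integrability of a product of two L² functions. -/
lemma my_mul_integrable {α : Type*} [MeasurableSpace α] {μ : Measure α} {u v : α → ℝ}
    (hu : AEStronglyMeasurable u μ) (hv : AEStronglyMeasurable v μ)
    (hu2 : Integrable (fun x => u x ^ 2) μ) (hv2 : Integrable (fun x => v x ^ 2) μ) :
    Integrable (fun x => u x * v x) μ := by
  refine Integrable.mono' (((hu2.add hv2).div_const 2)) (hu.mul hv)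
    (Filter.Eventually.of_forall fun x => ?_)
  simp only [Pi.add_apply]
  rw [Real.norm_eq_abs, abs_mul]
  nlinarith [sq_nonneg (|u x| - |v x|), sq_abs (u x), sq_abs (v x), abs_nonneg (u x),
    abs_nonneg (v x)]



lemma my_pointwise (γ B : ℝ) (hγ : 0 < γ) (hB : 0 < B) {d : E2 → ℝ}
    (hdb : ∀ x, |d x| ≤ 2 * B)
    (hlip : ∀ y z : E2, |d y - d z| ≤ 2 * B * ‖y - z‖)
    (hint : Integrable (fun y : E2 => Real.exp (-2 * γ * ‖y‖) * d y ^ 2)) (x : E2) :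
    |d x| ^ 4 ≤ 64 * B ^ 2 * Real.exp (2 * γ) / (volume (ball (0:E2) 1)).toReal *
      (Real.exp (2 * γ * ‖x‖) * ∫ y, Real.exp (-2 * γ * ‖y‖) * d y ^ 2) := by
  set vol1 : ℝ := (volume (ball (0:E2) 1)).toReal with hvol1
  have hv1 : 0 < vol1 := by
    apply ENNReal.toReal_pos (measure_ball_pos volume _ one_pos).ne'
      measure_ball_lt_top.ne
  set I : ℝ := ∫ y, Real.exp (-2 * γ * ‖y‖) * d y ^ 2 with hI
  have hInn : 0 ≤ I := integral_nonneg fun y => by positivity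
  set m : ℝ := |d x| with hm
  have hm0 : 0 ≤ m := abs_nonneg _
  rcases eq_or_lt_of_le hm0 with hm' | hm'
  · rw [← hm']
    have h1 : (0:ℝ) ≤ 64 * B ^ 2 * Real.exp (2 * γ) / vol1 *
        (Real.exp (2 * γ * ‖x‖) * I) := by
      apply mul_nonneg (by positivity) (mul_nonneg (Real.exp_pos _).le hInn)
    simpa using h1
  set r : ℝ := m / (4 * B) with hr
  have hr0 : 0 < r := by positivity
  have hr1 : r ≤ 1 := by
    rw [hr, div_le_one (by positivity)]
    nlinarith [hdb x]
  -- lower bound for the integrand on the ball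
  set c : ℝ := Real.exp (-2 * γ * (‖x‖ + 1)) * (m / 2) ^ 2 with hc
  have hball : ∀ y ∈ ball x r, c ≤ Real.exp (-2 * γ * ‖y‖) * d y ^ 2 := by
    intro y hy
    have hdy : m / 2 ≤ |d y| := by
      have h1 : |d x - d y| ≤ 2 * B * ‖x - y‖ := hlip x y
      have h2 : ‖x - y‖ < r := by
        rw [← dist_eq_norm, dist_comm]
        exact mem_ball.1 hy
      have h3 : |d x| - |d y| ≤ |d x - d y| := abs_sub_abs_le_abs_sub _ _
      have h4 : 2 * B * ‖x - y‖ ≤ 2 * B * r := by nlinarith [norm_nonneg (x - y)]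
      have h5 : 2 * B * r = m / 2 := by
        rw [hr, mul_div_assoc', div_eq_div_iff (by positivity) (by norm_num)]; ring
      nlinarith
    have hny : ‖y‖ ≤ ‖x‖ + 1 := by
      have := norm_sub_norm_le y x
      have h2 : ‖y - x‖ < r := mem_ball_iff_norm.1 hy
      nlinarith
    have hexp : Real.exp (-2 * γ * (‖x‖ + 1)) ≤ Real.exp (-2 * γ * ‖y‖) := by
      apply Real.exp_le_exp.2
      nlinarith
    have hsq : (m / 2) ^ 2 ≤ d y ^ 2 := by
      rw [← sq_abs (d y)]
      apply pow_le_pow_left₀ (by positivity) hdy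
    calc c ≤ Real.exp (-2 * γ * (‖x‖ + 1)) * d y ^ 2 := by
          apply mul_le_mul_of_nonneg_left hsq (Real.exp_pos _).le
      _ ≤ Real.exp (-2 * γ * ‖y‖) * d y ^ 2 := by
          apply mul_le_mul_of_nonneg_right hexp (by positivity)
  have key : c * (volume (ball x r)).toReal ≤ ∫ y in ball x r, Real.exp (-2 * γ * ‖y‖) * d y ^ 2 :=
    setIntegral_ge_of_const_le_real measurableSet_ball measure_ball_lt_top.ne hball
      hint.integrableOn
  have key2 : (∫ y in ball x r, Real.exp (-2 * γ * ‖y‖) * d y ^ 2) ≤ I :=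
    setIntegral_le_integral hint (Filter.Eventually.of_forall fun y => by positivity)
  have hvb : (volume (ball x r)).toReal = r ^ 2 * vol1 := by
    rw [Measure.addHaar_ball volume x hr0.le, ENNReal.toReal_mul,
      ENNReal.toReal_ofReal (by positivity)]
    congr 2
    simp [finrank_euclideanSpace_fin]
  rw [hvb] at key
  set P : ℝ := Real.exp (2 * γ * ‖x‖) with hP
  set Q : ℝ := Real.exp (2 * γ) with hQ
  have hPp : 0 < P := Real.exp_pos _
  have hQp : 0 < Q := Real.exp_pos _
  have e0 : Real.exp (-2 * γ * (‖x‖ + 1)) = (P * Q)⁻¹ := by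
    rw [hP, hQ, ← Real.exp_add, ← Real.exp_neg]
    congr 1
    ring
  rw [div_mul_eq_mul_div, le_div_iff₀ hv1]
  have key3 : c * (r ^ 2 * vol1) ≤ I := key.trans key2
  rw [hc, e0, hr] at key3
  have key4 := mul_le_mul_of_nonneg_left key3 (show (0:ℝ) ≤ 64 * B ^ 2 * P * Q by positivity)
  have lhs_eq : 64 * B ^ 2 * P * Q * ((P * Q)⁻¹ * (m / 2) ^ 2 * ((m / (4 * B)) ^ 2 * vol1)) =
      m ^ 4 * vol1 := by
    field_simp
    ring
  calc m ^ 4 * vol1 = 64 * B ^ 2 * P * Q * ((P * Q)⁻¹ * (m / 2) ^ 2 * ((m / (4 * B)) ^ 2 * vol1)) :=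
        lhs_eq.symm
    _ ≤ 64 * B ^ 2 * P * Q * I := key4
    _ = 64 * B ^ 2 * Q * (P * I) := by ring



lemma my_deriv_bound {f₁ f₂ g : E2 → ℝ} (h1 : ContDiff ℝ 1 f₁) (h2 : ContDiff ℝ 1 f₂)
    (hg : ContDiff ℝ 1 g) (x : E2) :
    ‖fderiv ℝ (fun y => (Real.cos (f₁ y + g y) - Real.cos (f₂ y + g y)) * g y) x‖ ≤
      |f₁ x - f₂ x| * ‖fderiv ℝ g x‖ +
      |g x| * (‖fderiv ℝ f₁ x - fderiv ℝ f₂ x‖ +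
        |f₁ x - f₂ x| * (‖fderiv ℝ f₂ x‖ + ‖fderiv ℝ g x‖)) := by
  set F1 := fderiv ℝ f₁ x
  set F2 := fderiv ℝ f₂ x
  set G := fderiv ℝ g x
  have d1 : HasFDerivAt f₁ F1 x := (h1.differentiable one_ne_zero x).hasFDerivAt
  have d2 : HasFDerivAt f₂ F2 x := (h2.differentiable one_ne_zero x).hasFDerivAt
  have dg : HasFDerivAt g G x := (hg.differentiable one_ne_zero x).hasFDerivAt
  set a := f₁ x + g x with ha
  set b := f₂ x + g x with hb
  set Cp : EuclideanSpace ℝ (Fin 2) →L[ℝ] ℝ :=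
    (-Real.sin a • (F1 + G)) - (-Real.sin b • (F2 + G)) with hCp
  have hca : HasFDerivAt (fun y => Real.cos (f₁ y + g y)) (-Real.sin a • (F1 + G)) x :=
    (d1.add dg).cos
  have hcb : HasFDerivAt (fun y => Real.cos (f₂ y + g y)) (-Real.sin b • (F2 + G)) x :=
    (d2.add dg).cos
  have hmul : HasFDerivAt (fun y => (Real.cos (f₁ y + g y) - Real.cos (f₂ y + g y)) * g y)
      ((Real.cos a - Real.cos b) • G + g x • Cp) x := (hca.sub hcb).mul dg
  rw [hmul.fderiv]
  have e1 : ‖(Real.cos a - Real.cos b) • G + g x • Cp‖ ≤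
      |Real.cos a - Real.cos b| * ‖G‖ + |g x| * ‖Cp‖ := by
    refine (norm_add_le _ _).trans ?_
    rw [norm_smul, norm_smul, Real.norm_eq_abs, Real.norm_eq_abs]
  have hab : a - b = f₁ x - f₂ x := by rw [ha, hb]; ring
  have hcos : |Real.cos a - Real.cos b| ≤ |f₁ x - f₂ x| := by
    rw [← hab]; exact my_abs_cos_sub_cos a b
  have hsin : |Real.sin b - Real.sin a| ≤ |f₁ x - f₂ x| := by
    calc |Real.sin b - Real.sin a| ≤ |b - a| := my_abs_sin_sub_sin b a
      _ = |f₁ x - f₂ x| := by rw [abs_sub_comm, hab]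
  have hrw : Cp = (-Real.sin a) • (F1 - F2) + (Real.sin b - Real.sin a) • (F2 + G) := by
    rw [hCp]; module
  have e2 : ‖Cp‖ ≤ ‖F1 - F2‖ + |f₁ x - f₂ x| * (‖F2‖ + ‖G‖) := by
    apply ContinuousLinearMap.opNorm_le_bound _ (by positivity) (fun y => ?_)
    have hy : Cp y = -Real.sin a * (F1 y + G y) - -Real.sin b * (F2 y + G y) := by
      simp only [hCp, ContinuousLinearMap.sub_apply, ContinuousLinearMap.smul_apply,
        ContinuousLinearMap.add_apply, smul_eq_mul]
    have hy2 : Cp y = -Real.sin a * (F1 y - F2 y) + (Real.sin b - Real.sin a) * (F2 y + G y) := by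
      rw [hy]; ring
    have hs1 : |Real.sin a| ≤ 1 := Real.abs_sin_le_one a
    have b1 : |F1 y - F2 y| ≤ ‖F1 - F2‖ * ‖y‖ := by
      have := (F1 - F2).le_opNorm y
      rwa [ContinuousLinearMap.sub_apply, Real.norm_eq_abs] at this
    have b2 : |F2 y| ≤ ‖F2‖ * ‖y‖ := by
      have := F2.le_opNorm y; rwa [Real.norm_eq_abs] at this
    have b3 : |G y| ≤ ‖G‖ * ‖y‖ := by
      have := G.le_opNorm y; rwa [Real.norm_eq_abs] at this
    rw [Real.norm_eq_abs, hy2]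
    calc |(-Real.sin a) * (F1 y - F2 y) + (Real.sin b - Real.sin a) * (F2 y + G y)|
        ≤ |(-Real.sin a) * (F1 y - F2 y)| + |(Real.sin b - Real.sin a) * (F2 y + G y)| :=
          abs_add_le _ _
      _ ≤ 1 * (‖F1 - F2‖ * ‖y‖) + |f₁ x - f₂ x| * (‖F2‖ * ‖y‖ + ‖G‖ * ‖y‖) := by
          rw [abs_mul, abs_mul, abs_neg]
          refine add_le_add (mul_le_mul hs1 b1 (abs_nonneg _) one_pos.le) ?_
          refine mul_le_mul hsin ((abs_add_le _ _).trans (add_le_add b2 b3)) (abs_nonneg _)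
            (abs_nonneg _)
      _ = (‖F1 - F2‖ + |f₁ x - f₂ x| * (‖F2‖ + ‖G‖)) * ‖y‖ := by ring
  refine e1.trans (add_le_add ?_ ?_)
  · exact mul_le_mul_of_nonneg_right hcos (norm_nonneg _)
  · exact mul_le_mul_of_nonneg_left e2 (abs_nonneg _)

set_option maxHeartbeats 1000000 in
/-- weighted `W^{1,1}` estimate for `(cos(f¹+g) − cos(f²+g))·g` in terms of
`‖f¹−f²‖_{H^{1,−γ}} ‖g‖_{H^{1,2γ}} + ‖f¹−f²‖_{L^{2,−γ}}^δ ‖g‖²_{H^{1,2γ}}`, uniformly over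
`f¹, f²` in a `W^{1,∞}` ball of radius `B`. -/
theorem cosine_sobolev_estimate (γ : ℝ) (hγ : 0 < γ) :
    ∃ δ : ℝ, 0 < δ ∧ δ < 1 ∧ ∀ B > 0, ∃ C > 0,
      ∀ f₁ f₂ g : EuclideanSpace ℝ (Fin 2) → ℝ,
        ContDiff ℝ 1 f₁ → ContDiff ℝ 1 f₂ → ContDiff ℝ 1 g →
        (∀ x, |f₁ x| + ‖fderiv ℝ f₁ x‖ ≤ B) →
        (∀ x, |f₂ x| + ‖fderiv ℝ f₂ x‖ ≤ B) →
        Integrable (fun x => Real.exp (-2 * γ * ‖x‖) *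
          ((f₁ x - f₂ x) ^ 2 + ‖fderiv ℝ f₁ x - fderiv ℝ f₂ x‖ ^ 2)) →
        Integrable (fun x => Real.exp (4 * γ * ‖x‖) * ((g x) ^ 2 + ‖fderiv ℝ g x‖ ^ 2)) →
        ∫ x, Real.exp (γ * ‖x‖) *
            (|(Real.cos (f₁ x + g x) - Real.cos (f₂ x + g x)) * g x| +
              ‖fderiv ℝ (fun y => (Real.cos (f₁ y + g y) - Real.cos (f₂ y + g y)) * g y) x‖)
          ≤ C *
            (Real.sqrt (∫ x, Real.exp (-2 * γ * ‖x‖) *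
                ((f₁ x - f₂ x) ^ 2 + ‖fderiv ℝ f₁ x - fderiv ℝ f₂ x‖ ^ 2)) *
              Real.sqrt (∫ x, Real.exp (4 * γ * ‖x‖) * ((g x) ^ 2 + ‖fderiv ℝ g x‖ ^ 2)) +
            Real.sqrt (∫ x, Real.exp (-2 * γ * ‖x‖) * (f₁ x - f₂ x) ^ 2) ^ δ *
              Real.sqrt (∫ x, Real.exp (4 * γ * ‖x‖) * ((g x) ^ 2 + ‖fderiv ℝ g x‖ ^ 2)) ^ 2) := by
  refine ⟨1/2, by norm_num, by norm_num, fun B hB => ?_⟩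
  set vol1 : ℝ := (volume (ball (0 : E2) 1)).toReal with hvol1
  have hv1 : 0 < vol1 :=
    ENNReal.toReal_pos (measure_ball_pos volume _ one_pos).ne' measure_ball_lt_top.ne
  set KK : ℝ := (64 * B ^ 2 * Real.exp (2 * γ) / vol1) ^ ((1:ℝ)/4) with hKKdef
  have hKK0 : 0 ≤ KK := Real.rpow_nonneg (by positivity) _
  refine ⟨3 + B + KK/2 + 1, by positivity, fun f₁ f₂ g h1 h2 hgc hb1 hb2 hd hgint => ?_⟩
  -- continuity facts
  have hc1 : Continuous f₁ := h1.continuous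
  have hc2 : Continuous f₂ := h2.continuous
  have hcg : Continuous g := hgc.continuous
  have hcF1 : Continuous (fderiv ℝ f₁) := h1.continuous_fderiv one_ne_zero
  have hcF2 : Continuous (fderiv ℝ f₂) := h2.continuous_fderiv one_ne_zero
  have hcG : Continuous (fderiv ℝ g) := hgc.continuous_fderiv one_ne_zero
  have cexp : ∀ c : ℝ, Continuous (fun x : E2 => Real.exp (c * ‖x‖)) := fun c =>
    Real.continuous_exp.comp (continuous_const.mul continuous_norm)
  -- uniform bounds
  have hf1b : ∀ x, |f₁ x| ≤ B := fun x => by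
    have := hb1 x; have := norm_nonneg (fderiv ℝ f₁ x); linarith
  have hf2b : ∀ x, |f₂ x| ≤ B := fun x => by
    have := hb2 x; have := norm_nonneg (fderiv ℝ f₂ x); linarith
  have hF1b : ∀ x, ‖fderiv ℝ f₁ x‖ ≤ B := fun x => by
    have := hb1 x; have := abs_nonneg (f₁ x); linarith
  have hF2b : ∀ x, ‖fderiv ℝ f₂ x‖ ≤ B := fun x => by
    have := hb2 x; have := abs_nonneg (f₂ x); linarith
  have hdb : ∀ x, |f₁ x - f₂ x| ≤ 2 * B := fun x => by
    have := abs_sub (f₁ x) (f₂ x)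
    have := hf1b x; have := hf2b x
    calc |f₁ x - f₂ x| ≤ |f₁ x| + |f₂ x| := abs_sub _ _
      _ ≤ 2 * B := by linarith
  have hdlip : ∀ y z : E2, |(f₁ y - f₂ y) - (f₁ z - f₂ z)| ≤ 2 * B * ‖y - z‖ := by
    intro y z
    have hdiff : ∀ w : E2, DifferentiableAt ℝ (fun u => f₁ u - f₂ u) w := fun w =>
      (h1.differentiable one_ne_zero w).sub (h2.differentiable one_ne_zero w)
    have hbound : ∀ w ∈ (univ : Set E2), ‖fderiv ℝ (fun u => f₁ u - f₂ u) w‖ ≤ 2 * B := by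
      intro w _
      rw [fderiv_fun_sub (h1.differentiable one_ne_zero w) (h2.differentiable one_ne_zero w)]
      calc ‖fderiv ℝ f₁ w - fderiv ℝ f₂ w‖ ≤ ‖fderiv ℝ f₁ w‖ + ‖fderiv ℝ f₂ w‖ := norm_sub_le _ _
        _ ≤ 2 * B := by have := hF1b w; have := hF2b w; linarith
    have := convex_univ.norm_image_sub_le_of_norm_fderiv_le
      (fun w _ => hdiff w) hbound (mem_univ z) (mem_univ y)
    rwa [Real.norm_eq_abs] at this
  -- componentwise integrability
  have habs : ∀ (c : ℝ) (u v : E2 → ℝ), Continuous u → Continuous v →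
      Integrable (fun x => Real.exp (c * ‖x‖) * (u x ^ 2 + v x ^ 2)) →
      Integrable (fun x => Real.exp (c * ‖x‖) * u x ^ 2) := by
    intro c u v hu hv hint
    refine hint.mono' (((cexp c).mul (hu.pow 2)).aestronglyMeasurable)
      (Filter.Eventually.of_forall fun x => ?_)
    rw [Real.norm_eq_abs, abs_of_nonneg (by positivity)]
    have h0 : (0:ℝ) ≤ v x ^ 2 := sq_nonneg _
    nlinarith [Real.exp_pos (c * ‖x‖), sq_nonneg (u x)]
  have hd_int : Integrable (fun y : E2 => Real.exp (-2 * γ * ‖y‖) * (f₁ y - f₂ y) ^ 2) := by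
    have := habs (-2 * γ) (fun y => f₁ y - f₂ y) (fun y => ‖fderiv ℝ f₁ y - fderiv ℝ f₂ y‖)
      (hc1.sub hc2) ((hcF1.sub hcF2).norm) ?_
    · exact this
    · simpa [sq_abs] using hd
  have hDd_int : Integrable (fun y : E2 => Real.exp (-2 * γ * ‖y‖) *
      ‖fderiv ℝ f₁ y - fderiv ℝ f₂ y‖ ^ 2) := by
    have := habs (-2 * γ) (fun y => ‖fderiv ℝ f₁ y - fderiv ℝ f₂ y‖) (fun y => f₁ y - f₂ y)
      ((hcF1.sub hcF2).norm) (hc1.sub hc2) ?_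
    · exact this
    · refine hd.congr (Filter.Eventually.of_forall fun x => ?_)
      ring
  have hg2_int : Integrable (fun y : E2 => Real.exp (4 * γ * ‖y‖) * g y ^ 2) := by
    have := habs (4 * γ) g (fun y => ‖fderiv ℝ g y‖) hcg hcG.norm ?_
    · exact this
    · simpa using hgint
  have hG2_int : Integrable (fun y : E2 => Real.exp (4 * γ * ‖y‖) * ‖fderiv ℝ g y‖ ^ 2) := by
    have := habs (4 * γ) (fun y => ‖fderiv ℝ g y‖) g hcG.norm hcg ?_
    · exact this
    · refine hgint.congr (Filter.Eventually.of_forall fun x => ?_)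
      ring
  -- integral abbreviations
  set I1 : ℝ := ∫ x : E2, Real.exp (-2 * γ * ‖x‖) *
    ((f₁ x - f₂ x) ^ 2 + ‖fderiv ℝ f₁ x - fderiv ℝ f₂ x‖ ^ 2) with hI1
  set Ig : ℝ := ∫ x : E2, Real.exp (4 * γ * ‖x‖) * (g x ^ 2 + ‖fderiv ℝ g x‖ ^ 2) with hIg
  set I0 : ℝ := ∫ x : E2, Real.exp (-2 * γ * ‖x‖) * (f₁ x - f₂ x) ^ 2 with hI0
  set J1 : ℝ := ∫ x : E2, Real.exp (-2 * γ * ‖x‖) * ‖fderiv ℝ f₁ x - fderiv ℝ f₂ x‖ ^ 2 with hJ1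
  set Jg0 : ℝ := ∫ x : E2, Real.exp (4 * γ * ‖x‖) * g x ^ 2 with hJg0
  set Jg1 : ℝ := ∫ x : E2, Real.exp (4 * γ * ‖x‖) * ‖fderiv ℝ g x‖ ^ 2 with hJg1
  have hI0nn : 0 ≤ I0 := integral_nonneg fun x => by positivity
  have hIgnn : 0 ≤ Ig := integral_nonneg fun x => by positivity
  have hI1nn : 0 ≤ I1 := integral_nonneg fun x => by positivity
  have hI0le : I0 ≤ I1 := integral_mono hd_int hd (fun x => by
    have := sq_nonneg ‖fderiv ℝ f₁ x - fderiv ℝ f₂ x‖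
    nlinarith [Real.exp_pos (-2 * γ * ‖x‖)])
  have hJ1le : J1 ≤ I1 := integral_mono hDd_int hd (fun x => by
    nlinarith [Real.exp_pos (-2 * γ * ‖x‖), sq_nonneg (f₁ x - f₂ x)])
  have hJg0le : Jg0 ≤ Ig := integral_mono hg2_int hgint (fun x => by
    nlinarith [Real.exp_pos (4 * γ * ‖x‖), sq_nonneg ‖fderiv ℝ g x‖])
  have hJg1le : Jg1 ≤ Ig := integral_mono hG2_int hgint (fun x => by
    nlinarith [Real.exp_pos (4 * γ * ‖x‖), sq_nonneg (g x)])
  set S : ℝ := Real.sqrt I0 ^ ((1:ℝ)/2) with hSdef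
  have hS0 : 0 ≤ S := Real.rpow_nonneg (Real.sqrt_nonneg _) _
  -- pointwise bound coming from the L² norm and the Lipschitz bound
  have hptw : ∀ x : E2, Real.exp (γ * ‖x‖) * |f₁ x - f₂ x| ≤
      KK * S * Real.exp (4 * γ * ‖x‖) := by
    intro x
    have hkey := my_pointwise γ B hγ hB (d := fun y => f₁ y - f₂ y) hdb hdlip hd_int x
    rw [← hI0] at hkey
    have hm0 : (0:ℝ) ≤ |f₁ x - f₂ x| := abs_nonneg _
    have h4 : |f₁ x - f₂ x| ≤
        ((64 * B ^ 2 * Real.exp (2 * γ) / vol1) * (Real.exp (2 * γ * ‖x‖) * I0)) ^ ((1:ℝ)/4) := by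
      calc |f₁ x - f₂ x| = (|f₁ x - f₂ x| ^ (4:ℕ)) ^ ((1:ℝ)/4) := by
            rw [← Real.rpow_natCast (|f₁ x - f₂ x|) 4, ← Real.rpow_mul hm0]
            norm_num
        _ ≤ _ := by
            rw [← Real.rpow_natCast (|f₁ x - f₂ x|) 4]
            apply Real.rpow_le_rpow (Real.rpow_nonneg hm0 _) _ (by norm_num)
            rw [Real.rpow_natCast]
            exact hkey
    have hsplit : ((64 * B ^ 2 * Real.exp (2 * γ) / vol1) * (Real.exp (2 * γ * ‖x‖) * I0)) ^
        ((1:ℝ)/4) = KK * (Real.exp ((γ/2) * ‖x‖) * I0 ^ ((1:ℝ)/4)) := by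
      rw [Real.mul_rpow (by positivity) (mul_nonneg (Real.exp_pos _).le hI0nn),
        Real.mul_rpow (Real.exp_pos _).le hI0nn, hKKdef]
      congr 2
      rw [← Real.exp_mul]
      congr 1
      ring
    have hS4 : I0 ^ ((1:ℝ)/4) = S := by
      rw [hSdef, Real.sqrt_eq_rpow, ← Real.rpow_mul hI0nn]
      norm_num
    rw [hsplit, hS4] at h4
    calc Real.exp (γ * ‖x‖) * |f₁ x - f₂ x|
        ≤ Real.exp (γ * ‖x‖) * (KK * (Real.exp ((γ/2) * ‖x‖) * S)) :=
          mul_le_mul_of_nonneg_left h4 (Real.exp_pos _).le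
      _ = KK * S * (Real.exp (γ * ‖x‖) * Real.exp ((γ/2) * ‖x‖)) := by ring
      _ = KK * S * Real.exp ((3*γ/2) * ‖x‖) := by
          rw [← Real.exp_add]
          congr 2
          ring
      _ ≤ KK * S * Real.exp (4 * γ * ‖x‖) := by
          apply mul_le_mul_of_nonneg_left _ (mul_nonneg hKK0 hS0)
          apply Real.exp_le_exp.2
          nlinarith [norm_nonneg x]
  -- the dominating function
  set u0 : E2 → ℝ := fun x => Real.exp (-γ * ‖x‖) * |f₁ x - f₂ x| with hu0def
  set u1 : E2 → ℝ := fun x => Real.exp (-γ * ‖x‖) * ‖fderiv ℝ f₁ x - fderiv ℝ f₂ x‖ with hu1def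
  set v0 : E2 → ℝ := fun x => Real.exp (2 * γ * ‖x‖) * |g x| with hv0def
  set v1 : E2 → ℝ := fun x => Real.exp (2 * γ * ‖x‖) * ‖fderiv ℝ g x‖ with hv1def
  have hu0m : AEStronglyMeasurable u0 volume :=
    ((cexp (-γ)).mul ((hc1.sub hc2).abs)).aestronglyMeasurable
  have hu1m : AEStronglyMeasurable u1 volume :=
    ((cexp (-γ)).mul ((hcF1.sub hcF2).norm)).aestronglyMeasurable
  have hv0m : AEStronglyMeasurable v0 volume :=
    ((cexp (2*γ)).mul hcg.abs).aestronglyMeasurable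
  have hv1m : AEStronglyMeasurable v1 volume :=
    ((cexp (2*γ)).mul hcG.norm).aestronglyMeasurable
  have hu0nn : ∀ x, 0 ≤ u0 x := fun x => by rw [hu0def]; positivity
  have hu1nn : ∀ x, 0 ≤ u1 x := fun x => by rw [hu1def]; positivity
  have hv0nn : ∀ x, 0 ≤ v0 x := fun x => by rw [hv0def]; positivity
  have hv1nn : ∀ x, 0 ≤ v1 x := fun x => by rw [hv1def]; positivity
  have expsq : ∀ (c : ℝ) (x : E2), Real.exp (c * ‖x‖) ^ 2 = Real.exp (2 * c * ‖x‖) := by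
    intro c x
    rw [pow_two, ← Real.exp_add]
    congr 1
    ring
  have hu0sq : ∀ x, u0 x ^ 2 = Real.exp (-2 * γ * ‖x‖) * (f₁ x - f₂ x) ^ 2 := by
    intro x
    rw [hu0def]
    simp only
    rw [mul_pow, sq_abs, expsq]
    norm_num
  have hu1sq : ∀ x, u1 x ^ 2 = Real.exp (-2 * γ * ‖x‖) * ‖fderiv ℝ f₁ x - fderiv ℝ f₂ x‖ ^ 2 := by
    intro x
    rw [hu1def]
    simp only
    rw [mul_pow, expsq]
    norm_num
  have hv0sq : ∀ x, v0 x ^ 2 = Real.exp (4 * γ * ‖x‖) * g x ^ 2 := by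
    intro x
    rw [hv0def]
    simp only
    rw [mul_pow, sq_abs, expsq, show (2:ℝ)*(2*γ) = 4*γ from by ring]
  have hv1sq : ∀ x, v1 x ^ 2 = Real.exp (4 * γ * ‖x‖) * ‖fderiv ℝ g x‖ ^ 2 := by
    intro x
    rw [hv1def]
    simp only
    rw [mul_pow, expsq, show (2:ℝ)*(2*γ) = 4*γ from by ring]
  have hu0sqint : Integrable (fun x => u0 x ^ 2) := by
    refine hd_int.congr (Filter.Eventually.of_forall fun x => (hu0sq x).symm)
  have hu1sqint : Integrable (fun x => u1 x ^ 2) := by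
    refine hDd_int.congr (Filter.Eventually.of_forall fun x => (hu1sq x).symm)
  have hv0sqint : Integrable (fun x => v0 x ^ 2) := by
    refine hg2_int.congr (Filter.Eventually.of_forall fun x => (hv0sq x).symm)
  have hv1sqint : Integrable (fun x => v1 x ^ 2) := by
    refine hG2_int.congr (Filter.Eventually.of_forall fun x => (hv1sq x).symm)
  have int1 : Integrable (fun x => u0 x * v0 x) := my_mul_integrable hu0m hv0m hu0sqint hv0sqint
  have int2 : Integrable (fun x => u0 x * v1 x) := my_mul_integrable hu0m hv1m hu0sqint hv1sqint
  have int3 : Integrable (fun x => u1 x * v0 x) := my_mul_integrable hu1m hv0m hu1sqint hv0sqint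
  -- Cauchy–Schwarz bounds
  have hNg : Real.sqrt Jg0 ≤ Real.sqrt Ig := Real.sqrt_le_sqrt hJg0le
  have hNg1 : Real.sqrt Jg1 ≤ Real.sqrt Ig := Real.sqrt_le_sqrt hJg1le
  have hN0 : Real.sqrt I0 ≤ Real.sqrt I1 := Real.sqrt_le_sqrt hI0le
  have hN1 : Real.sqrt J1 ≤ Real.sqrt I1 := Real.sqrt_le_sqrt hJ1le
  have cs1 : ∫ x, u0 x * v0 x ≤ Real.sqrt I1 * Real.sqrt Ig := by
    have h := my_cs hu0m hv0m hu0nn hv0nn hu0sqint hv0sqint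
    simp only [hu0sq, hv0sq] at h
    rw [← hI0, ← hJg0] at h
    exact h.trans (mul_le_mul hN0 hNg (Real.sqrt_nonneg _) (Real.sqrt_nonneg _))
  have cs2 : ∫ x, u0 x * v1 x ≤ Real.sqrt I1 * Real.sqrt Ig := by
    have h := my_cs hu0m hv1m hu0nn hv1nn hu0sqint hv1sqint
    simp only [hu0sq, hv1sq] at h
    rw [← hI0, ← hJg1] at h
    exact h.trans (mul_le_mul hN0 hNg1 (Real.sqrt_nonneg _) (Real.sqrt_nonneg _))
  have cs3 : ∫ x, u1 x * v0 x ≤ Real.sqrt I1 * Real.sqrt Ig := by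
    have h := my_cs hu1m hv0m hu1nn hv0nn hu1sqint hv0sqint
    simp only [hu1sq, hv0sq] at h
    rw [← hJ1, ← hJg0] at h
    exact h.trans (mul_le_mul hN1 hNg (Real.sqrt_nonneg _) (Real.sqrt_nonneg _))
  -- the dominating function
  set D : E2 → ℝ := fun x => (1 + B) * (u0 x * v0 x) + u0 x * v1 x + u1 x * v0 x +
    (KK * S / 2) * (Real.exp (4 * γ * ‖x‖) * (g x ^ 2 + ‖fderiv ℝ g x‖ ^ 2)) with hDdef
  have ia : Integrable (fun x : E2 => (1 + B) * (u0 x * v0 x)) := int1.const_mul _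
  have iab : Integrable (fun x : E2 => (1 + B) * (u0 x * v0 x) + u0 x * v1 x) := ia.add int2
  have iabc : Integrable (fun x : E2 => (1 + B) * (u0 x * v0 x) + u0 x * v1 x + u1 x * v0 x) :=
    iab.add int3
  have id2 : Integrable (fun x : E2 => (KK * S / 2) *
      (Real.exp (4 * γ * ‖x‖) * (g x ^ 2 + ‖fderiv ℝ g x‖ ^ 2))) := hgint.const_mul _
  have hDint : Integrable D := iabc.add id2
  -- pointwise domination
  have hdom : ∀ x : E2, Real.exp (γ * ‖x‖) *
      (|(Real.cos (f₁ x + g x) - Real.cos (f₂ x + g x)) * g x| +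
        ‖fderiv ℝ (fun y => (Real.cos (f₁ y + g y) - Real.cos (f₂ y + g y)) * g y) x‖) ≤ D x := by
    intro x
    have hcosd : |Real.cos (f₁ x + g x) - Real.cos (f₂ x + g x)| ≤ |f₁ x - f₂ x| := by
      have h := my_abs_cos_sub_cos (f₁ x + g x) (f₂ x + g x)
      have h' : (f₁ x + g x) - (f₂ x + g x) = f₁ x - f₂ x := by ring
      rwa [h'] at h
    have hA : |(Real.cos (f₁ x + g x) - Real.cos (f₂ x + g x)) * g x| ≤
        |f₁ x - f₂ x| * |g x| := by
      rw [abs_mul]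
      exact mul_le_mul_of_nonneg_right hcosd (abs_nonneg _)
    have hB' := my_deriv_bound h1 h2 hgc x
    have amgm : |g x| * ‖fderiv ℝ g x‖ ≤ (g x ^ 2 + ‖fderiv ℝ g x‖ ^ 2) / 2 := by
      nlinarith [sq_nonneg (|g x| - ‖fderiv ℝ g x‖), sq_abs (g x)]
    have Eb1 : Real.exp (γ * ‖x‖) * (|f₁ x - f₂ x| * |g x|) = u0 x * v0 x := by
      rw [hu0def, hv0def]
      simp only
      rw [show Real.exp (-γ * ‖x‖) * |f₁ x - f₂ x| * (Real.exp (2 * γ * ‖x‖) * |g x|) =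
        (Real.exp (-γ * ‖x‖) * Real.exp (2 * γ * ‖x‖)) * (|f₁ x - f₂ x| * |g x|) from by ring,
        ← Real.exp_add]
      ring_nf
    have Eb2 : Real.exp (γ * ‖x‖) * (|f₁ x - f₂ x| * ‖fderiv ℝ g x‖) = u0 x * v1 x := by
      rw [hu0def, hv1def]
      simp only
      rw [show Real.exp (-γ * ‖x‖) * |f₁ x - f₂ x| * (Real.exp (2 * γ * ‖x‖) * ‖fderiv ℝ g x‖) =
        (Real.exp (-γ * ‖x‖) * Real.exp (2 * γ * ‖x‖)) * (|f₁ x - f₂ x| * ‖fderiv ℝ g x‖) from by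
          ring, ← Real.exp_add]
      ring_nf
    have Eb3 : Real.exp (γ * ‖x‖) * (|g x| * ‖fderiv ℝ f₁ x - fderiv ℝ f₂ x‖) = u1 x * v0 x := by
      rw [hu1def, hv0def]
      simp only
      rw [show Real.exp (-γ * ‖x‖) * ‖fderiv ℝ f₁ x - fderiv ℝ f₂ x‖ *
          (Real.exp (2 * γ * ‖x‖) * |g x|) =
        (Real.exp (-γ * ‖x‖) * Real.exp (2 * γ * ‖x‖)) *
          (|g x| * ‖fderiv ℝ f₁ x - fderiv ℝ f₂ x‖) from by ring, ← Real.exp_add]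
      ring_nf
    calc Real.exp (γ * ‖x‖) *
        (|(Real.cos (f₁ x + g x) - Real.cos (f₂ x + g x)) * g x| +
          ‖fderiv ℝ (fun y => (Real.cos (f₁ y + g y) - Real.cos (f₂ y + g y)) * g y) x‖)
        ≤ Real.exp (γ * ‖x‖) * ((|f₁ x - f₂ x| * |g x|) +
            (|f₁ x - f₂ x| * ‖fderiv ℝ g x‖ +
              |g x| * (‖fderiv ℝ f₁ x - fderiv ℝ f₂ x‖ +
                |f₁ x - f₂ x| * (‖fderiv ℝ f₂ x‖ + ‖fderiv ℝ g x‖)))) :=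
          mul_le_mul_of_nonneg_left (add_le_add hA hB') (Real.exp_pos _).le
      _ = Real.exp (γ * ‖x‖) * (|f₁ x - f₂ x| * |g x|) +
          Real.exp (γ * ‖x‖) * (|f₁ x - f₂ x| * ‖fderiv ℝ g x‖) +
          Real.exp (γ * ‖x‖) * (|g x| * ‖fderiv ℝ f₁ x - fderiv ℝ f₂ x‖) +
          ‖fderiv ℝ f₂ x‖ * (Real.exp (γ * ‖x‖) * (|f₁ x - f₂ x| * |g x|)) +
          (Real.exp (γ * ‖x‖) * |f₁ x - f₂ x|) * (|g x| * ‖fderiv ℝ g x‖) := by ring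
      _ ≤ Real.exp (γ * ‖x‖) * (|f₁ x - f₂ x| * |g x|) +
          Real.exp (γ * ‖x‖) * (|f₁ x - f₂ x| * ‖fderiv ℝ g x‖) +
          Real.exp (γ * ‖x‖) * (|g x| * ‖fderiv ℝ f₁ x - fderiv ℝ f₂ x‖) +
          B * (Real.exp (γ * ‖x‖) * (|f₁ x - f₂ x| * |g x|)) +
          (KK * S * Real.exp (4 * γ * ‖x‖)) * ((g x ^ 2 + ‖fderiv ℝ g x‖ ^ 2) / 2) := by
          refine add_le_add (add_le_add le_rfl ?_) ?_
          · exact mul_le_mul_of_nonneg_right (hF2b x) (by positivity)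
          · exact mul_le_mul (hptw x) amgm (by positivity)
              (mul_nonneg (mul_nonneg hKK0 hS0) (Real.exp_pos _).le)
      _ = D x := by
          rw [hDdef]
          simp only
          rw [Eb1, Eb2, Eb3]
          ring
  -- put everything together
  have hmono : (∫ x, Real.exp (γ * ‖x‖) *
      (|(Real.cos (f₁ x + g x) - Real.cos (f₂ x + g x)) * g x| +
        ‖fderiv ℝ (fun y => (Real.cos (f₁ y + g y) - Real.cos (f₂ y + g y)) * g y) x‖))
      ≤ ∫ x, D x := by
    refine integral_mono_of_nonneg (Filter.Eventually.of_forall fun x => by positivity) hDint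
      (Filter.Eventually.of_forall hdom)
  have hsum : ∫ x, D x = (1 + B) * (∫ x, u0 x * v0 x) + (∫ x, u0 x * v1 x) +
      (∫ x, u1 x * v0 x) + (KK * S / 2) * Ig := by
    simp only [hDdef]
    rw [integral_add iabc id2, integral_add iab int3, integral_add ia int2,
      integral_const_mul, integral_const_mul]
  have hfinal : ∫ x, D x ≤ (3 + B) * (Real.sqrt I1 * Real.sqrt Ig) +
      (KK * S / 2) * Real.sqrt Ig ^ 2 := by
    rw [hsum, Real.sq_sqrt hIgnn]
    have hprod_nn : (0:ℝ) ≤ Real.sqrt I1 * Real.sqrt Ig :=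
      mul_nonneg (Real.sqrt_nonneg _) (Real.sqrt_nonneg _)
    have h1' := mul_le_mul_of_nonneg_left cs1 (show (0:ℝ) ≤ 1 + B by linarith)
    linarith [cs2, cs3]
  refine hmono.trans (hfinal.trans ?_)
  have hsq_nn : (0:ℝ) ≤ Real.sqrt Ig ^ 2 := sq_nonneg _
  nlinarith [mul_nonneg (Real.sqrt_nonneg I1) (Real.sqrt_nonneg Ig),
    mul_nonneg hS0 hsq_nn, hKK0, hB.le,
    mul_nonneg (mul_nonneg hKK0 (Real.sqrt_nonneg I1)) (Real.sqrt_nonneg Ig)]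
end

section
/- Let m > 0 and θ ∈ (0,1). There is a constant C, depending only on m and θ, such that for every z ∈ ℝ² with z ≠ 0, ∫₀^∞ (1+s)^θ e^{-m²/s} (4πs)^{-1} e^{-s|z|²/4} ds ≤ C |z|^{-2θ}. -/
open MeasureTheory Real Set

/-- Pointwise key bound: `(1+s)^θ e^{-m²/s} ≤ 2(1+1/m²) s^θ` for `s > 0`. -/
lemma key_pointwise_bound (m θ : ℝ) (hm : 0 < m) (hθ0 : 0 < θ) (hθ1 : θ < 1)
    {s : ℝ} (hs : 0 < s) :
    (1 + s) ^ θ * Real.exp (-m ^ 2 / s) ≤ 2 * (1 + 1 / m ^ 2) * s ^ θ := by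
  have hsθ : (0:ℝ) ≤ s ^ θ := Real.rpow_nonneg hs.le θ
  rcases le_or_gt 1 s with h1 | h1
  · -- s ≥ 1
    have h2s : (1 + s) ^ θ ≤ (2 * s) ^ θ :=
      Real.rpow_le_rpow (by linarith) (by linarith) hθ0.le
    have hmul : (2 * s) ^ θ = 2 ^ θ * s ^ θ := Real.mul_rpow (by norm_num) hs.le
    have h2θ : (2:ℝ) ^ θ ≤ 2 := by
      calc (2:ℝ) ^ θ ≤ 2 ^ (1:ℝ) :=
            Real.rpow_le_rpow_of_exponent_le one_le_two hθ1.le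
        _ = 2 := Real.rpow_one 2
    have hexp : Real.exp (-m ^ 2 / s) ≤ 1 := by
      apply Real.exp_le_one_iff.mpr
      have : (0:ℝ) < m ^ 2 / s := by positivity
      rw [neg_div]; linarith
    have hexp0 : (0:ℝ) < Real.exp (-m ^ 2 / s) := Real.exp_pos _
    have hpos : (0:ℝ) ≤ (1 + s) ^ θ := Real.rpow_nonneg (by linarith) θ
    have hinv : (0:ℝ) < 1 / m ^ 2 := by positivity
    calc (1 + s) ^ θ * Real.exp (-m ^ 2 / s) ≤ (1 + s) ^ θ * 1 := by
          exact mul_le_mul_of_nonneg_left hexp hpos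
      _ = (1 + s) ^ θ := mul_one _
      _ ≤ 2 ^ θ * s ^ θ := by rw [← hmul]; exact h2s
      _ ≤ 2 * s ^ θ := mul_le_mul_of_nonneg_right h2θ hsθ
      _ ≤ 2 * (1 + 1 / m ^ 2) * s ^ θ := by nlinarith
  · -- s < 1
    have h2s : (1 + s) ^ θ ≤ 2 := by
      calc (1 + s) ^ θ ≤ 2 ^ θ :=
            Real.rpow_le_rpow (by linarith) (by linarith) hθ0.le
        _ ≤ 2 ^ (1:ℝ) := Real.rpow_le_rpow_of_exponent_le one_le_two hθ1.le
        _ = 2 := Real.rpow_one 2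
    have hx : (0:ℝ) < m ^ 2 / s := by positivity
    have hexp : Real.exp (-m ^ 2 / s) ≤ s / m ^ 2 := by
      have h1' : m ^ 2 / s ≤ Real.exp (m ^ 2 / s) := by
        have := Real.add_one_le_exp (m ^ 2 / s); linarith
      have : Real.exp (-m ^ 2 / s) = (Real.exp (m ^ 2 / s))⁻¹ := by
        rw [← Real.exp_neg]; ring_nf
      rw [this]
      rw [inv_le_comm₀ (Real.exp_pos _) (by positivity)]
      calc (s / m ^ 2)⁻¹ = m ^ 2 / s := by field_simp
        _ ≤ Real.exp (m ^ 2 / s) := h1'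
    have hsθ' : s ≤ s ^ θ := by
      calc s = s ^ (1:ℝ) := (Real.rpow_one s).symm
        _ ≤ s ^ θ := Real.rpow_le_rpow_of_exponent_ge hs h1.le hθ1.le
    have hpos : (0:ℝ) ≤ (1 + s) ^ θ := Real.rpow_nonneg (by linarith) θ
    have hexp0 : (0:ℝ) ≤ Real.exp (-m ^ 2 / s) := (Real.exp_pos _).le
    have hm2 : (0:ℝ) < m ^ 2 := by positivity
    calc (1 + s) ^ θ * Real.exp (-m ^ 2 / s) ≤ 2 * (s / m ^ 2) := by
          apply mul_le_mul h2s hexp hexp0 (by norm_num)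
      _ ≤ 2 * (s ^ θ / m ^ 2) := by gcongr
      _ ≤ 2 * (1 + 1 / m ^ 2) * s ^ θ := by
          rw [mul_assoc]
          apply mul_le_mul_of_nonneg_left _ (by norm_num)
          rw [div_eq_mul_inv, ← one_div]
          nlinarith

/-- `∫₀^∞ (1+s)^θ e^{-m²/s}(4πs)⁻¹ e^{-s|z|²/4} ds ≤ C |z|^{-2θ}`
for `θ ∈ (0,1)`. -/
theorem renormalized_covariance_bound (m θ : ℝ) (hm : 0 < m) (hθ0 : 0 < θ) (hθ1 : θ < 1) :
    ∃ C > 0, ∀ z : EuclideanSpace ℝ (Fin 2), z ≠ 0 →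
      ∫ s in Ioi (0:ℝ),
          (1 + s) ^ θ * Real.exp (-m ^ 2 / s) / (4 * π * s) * Real.exp (-s * ‖z‖ ^ 2 / 4)
        ≤ C * ‖z‖ ^ (-(2 * θ)) := by
  have hπ : (0:ℝ) < π := Real.pi_pos
  set K : ℝ := 2 * (1 + 1 / m ^ 2) / (4 * π) with hK
  have hKpos : 0 < K := by positivity
  have hΓ : 0 < Real.Gamma θ := Real.Gamma_pos_of_pos hθ0
  refine ⟨K * Real.Gamma θ * 4 ^ θ, by positivity, fun z hz => ?_⟩
  set r : ℝ := ‖z‖ with hr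
  have hrpos : 0 < r := norm_pos_iff.mpr hz
  set a : ℝ := r ^ 2 / 4 with ha
  have hapos : 0 < a := by positivity
  -- the dominating function
  set g : ℝ → ℝ := fun s => K * (s ^ (θ - 1) * Real.exp (-(a * s))) with hg
  have hgint : IntegrableOn g (Ioi 0) := by
    apply Integrable.const_mul
    have := integrableOn_rpow_mul_exp_neg_mul_rpow (p := 1) (s := θ - 1) (b := a)
      (by linarith) one_pos hapos
    simpa [Real.rpow_one, IntegrableOn] using this
  have hmono : (∫ s in Ioi (0:ℝ),
      (1 + s) ^ θ * Real.exp (-m ^ 2 / s) / (4 * π * s) * Real.exp (-s * r ^ 2 / 4))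
      ≤ ∫ s in Ioi (0:ℝ), g s := by
    apply integral_mono_of_nonneg
    · filter_upwards [ae_restrict_mem measurableSet_Ioi] with s hs
      have hs' : (0:ℝ) < s := hs
      positivity
    · exact hgint
    · filter_upwards [ae_restrict_mem measurableSet_Ioi] with s hs
      have hs' : (0:ℝ) < s := hs
      have hkey := key_pointwise_bound m θ hm hθ0 hθ1 hs'
      have hexp : Real.exp (-s * r ^ 2 / 4) = Real.exp (-(a * s)) := by
        congr 1; rw [ha]; ring
      rw [hexp]
      have h1 : (1 + s) ^ θ * Real.exp (-m ^ 2 / s) / (4 * π * s)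
          ≤ K * s ^ (θ - 1) := by
        rw [div_le_iff₀ (by positivity)]
        have hsθ : s ^ (θ - 1) * (4 * π * s) = (4 * π) * s ^ θ := by
          rw [Real.rpow_sub hs', Real.rpow_one]
          field_simp
        calc (1 + s) ^ θ * Real.exp (-m ^ 2 / s) ≤ 2 * (1 + 1 / m ^ 2) * s ^ θ := hkey
          _ = K * (s ^ (θ - 1) * (4 * π * s)) := by
              rw [hsθ, hK]; field_simp
          _ = K * s ^ (θ - 1) * (4 * π * s) := by ring
      calc (1 + s) ^ θ * Real.exp (-m ^ 2 / s) / (4 * π * s) * Real.exp (-(a * s))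
          ≤ K * s ^ (θ - 1) * Real.exp (-(a * s)) :=
            mul_le_mul_of_nonneg_right h1 (Real.exp_pos _).le
        _ = g s := by rw [hg]; ring
  have hgval : (∫ s in Ioi (0:ℝ), g s) = K * ((1 / a) ^ θ * Real.Gamma θ) := by
    rw [hg, MeasureTheory.integral_const_mul,
      Real.integral_rpow_mul_exp_neg_mul_Ioi hθ0 hapos]
  have hrw : (1 / a : ℝ) ^ θ = 4 ^ θ * r ^ (-(2 * θ)) := by
    have h1a : (1 / a : ℝ) = 4 / r ^ 2 := by rw [ha]; field_simp
    rw [h1a, Real.div_rpow (by norm_num) (by positivity)]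
    have : (r ^ 2 : ℝ) ^ θ = r ^ (2 * θ) := by
      rw [← Real.rpow_natCast r 2, ← Real.rpow_mul hrpos.le]
      norm_num
    rw [this, Real.rpow_neg hrpos.le, div_eq_mul_inv]
  calc (∫ s in Ioi (0:ℝ),
      (1 + s) ^ θ * Real.exp (-m ^ 2 / s) / (4 * π * s) * Real.exp (-s * r ^ 2 / 4))
      ≤ ∫ s in Ioi (0:ℝ), g s := hmono
    _ = K * ((1 / a) ^ θ * Real.Gamma θ) := hgval
    _ = K * Real.Gamma θ * 4 ^ θ * r ^ (-(2 * θ)) := by rw [hrw]; ring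
end

section
/- Let r ∈ ℝ, a > |r|, and z ∈ ℝ². For every measurable u : ℝ² → ℝ, ( ∫_{ℝ²} e^{2r|x−z|} ( ∫_{ℝ²} e^{-a|x−y|} |u(y)| dy )² dx )^{1/2} ≤ ( ∫_{ℝ²} e^{-(a−|r|)|y|} dy ) · ( ∫_{ℝ²} e^{2r|y−z|} u(y)² dy )^{1/2}. -/
open MeasureTheory Real Set
open scoped ENNReal

lemma cs_lintegral {α : Type*} [MeasurableSpace α] (μ : Measure α) (g h : α → ℝ≥0∞)
    (hg : AEMeasurable g μ) (hh : AEMeasurable h μ) :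
    (∫⁻ x, g x * h x ∂μ) ^ 2 ≤ (∫⁻ x, g x ∂μ) * (∫⁻ x, g x * (h x) ^ 2 ∂μ) := by
  have hgg : ∀ x : ℝ≥0∞, x ^ ((1:ℝ)/2) * x ^ ((1:ℝ)/2) = x := by
    intro x
    rw [← ENNReal.rpow_add_of_nonneg ((1:ℝ)/2) ((1:ℝ)/2) (by norm_num) (by norm_num)]
    norm_num
  have hpq : Real.HolderConjugate 2 2 := Real.HolderConjugate.two_two
  have key : ∫⁻ x, g x * h x ∂μ ≤
      (∫⁻ x, g x ∂μ) ^ ((1:ℝ)/2) * (∫⁻ x, g x * (h x)^2 ∂μ) ^ ((1:ℝ)/2) := by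
    calc ∫⁻ x, g x * h x ∂μ
        = ∫⁻ x, (g x ^ ((1:ℝ)/2)) * ((g x ^ ((1:ℝ)/2)) * h x) ∂μ := by
          refine lintegral_congr fun x => ?_
          rw [← mul_assoc, hgg]
      _ ≤ (∫⁻ x, (g x ^ ((1:ℝ)/2)) ^ (2:ℝ) ∂μ) ^ ((1:ℝ)/2) *
          (∫⁻ x, ((g x ^ ((1:ℝ)/2)) * h x) ^ (2:ℝ) ∂μ) ^ ((1:ℝ)/2) := by
          simpa using ENNReal.lintegral_mul_le_Lp_mul_Lq μ hpq
            (hg.pow_const _) ((hg.pow_const _).mul hh)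
      _ = (∫⁻ x, g x ∂μ) ^ ((1:ℝ)/2) * (∫⁻ x, g x * (h x)^2 ∂μ) ^ ((1:ℝ)/2) := by
          congr 1
          · congr 1; refine lintegral_congr fun x => ?_
            rw [← ENNReal.rpow_mul]; norm_num
          · congr 1; refine lintegral_congr fun x => ?_
            rw [ENNReal.mul_rpow_of_nonneg _ _ (by norm_num : (0:ℝ) ≤ 2),
              ← ENNReal.rpow_mul, ← ENNReal.rpow_natCast (h x) 2]
            norm_num
  calc (∫⁻ x, g x * h x ∂μ) ^ 2
      ≤ ((∫⁻ x, g x ∂μ) ^ ((1:ℝ)/2) * (∫⁻ x, g x * (h x)^2 ∂μ) ^ ((1:ℝ)/2)) ^ 2 :=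
        pow_le_pow_left' key 2
    _ = (∫⁻ x, g x ∂μ) * (∫⁻ x, g x * (h x)^2 ∂μ) := by
        rw [mul_pow, sq, sq, hgg, hgg]

/-- weighted Young convolution inequality for exponential kernels:
`‖e^{2r|·−z|} (e^{-a|·|} ∗ |u|)²‖` in `L²` is controlled by
`(∫ e^{-(a−|r|)|y|} dy) ‖e^{r|·−z|} u‖_{L²}` whenever `|r| < a`. -/
theorem weighted_young_exponential (r a : ℝ) (ha : |r| < a)
    (z : EuclideanSpace ℝ (Fin 2))
    (u : EuclideanSpace ℝ (Fin 2) → ℝ) (hu : Measurable u) :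
    (∫⁻ x, ENNReal.ofReal (Real.exp (2 * r * ‖x - z‖)) *
        (∫⁻ y, ENNReal.ofReal (Real.exp (-a * ‖x - y‖) * |u y|)) ^ 2) ^ ((1:ℝ)/2)
      ≤ (∫⁻ y : EuclideanSpace ℝ (Fin 2), ENNReal.ofReal (Real.exp (-(a - |r|) * ‖y‖))) *
          (∫⁻ y, ENNReal.ofReal (Real.exp (2 * r * ‖y - z‖) * (u y) ^ 2)) ^ ((1:ℝ)/2) := by
  set k : EuclideanSpace ℝ (Fin 2) → ℝ≥0∞ := fun y => ENNReal.ofReal (Real.exp (-(a - |r|) * ‖y‖)) with hk_def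
  set K : ℝ≥0∞ := ∫⁻ y, k y with hK_def
  set F : EuclideanSpace ℝ (Fin 2) → ℝ≥0∞ := fun y => ENNReal.ofReal (Real.exp (2 * r * ‖y - z‖) * (u y) ^ 2) with hF_def
  set h : EuclideanSpace ℝ (Fin 2) → ℝ≥0∞ := fun y => ENNReal.ofReal (Real.exp (r * ‖y - z‖) * |u y|) with hh_def
  have hk_meas : Measurable k :=
    (Real.continuous_exp.comp (continuous_const.mul continuous_norm)).measurable.ennreal_ofReal
  have hh_meas : Measurable h :=
    (((Real.continuous_exp.comp ((continuous_const.mul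
      ((continuous_id.sub continuous_const).norm)))).measurable).mul hu.abs).ennreal_ofReal
  have hF_meas : Measurable F :=
    (((Real.continuous_exp.comp ((continuous_const.mul
      ((continuous_id.sub continuous_const).norm)))).measurable).mul (hu.pow_const 2)).ennreal_ofReal
  have hsq : ∀ y, h y ^ 2 = F y := by
    intro y
    simp only [hh_def, hF_def]
    rw [← ENNReal.ofReal_pow (by positivity), mul_pow, sq_abs, sq (Real.exp _),
      ← Real.exp_add, show r * ‖y - z‖ + r * ‖y - z‖ = 2 * r * ‖y - z‖ by ring]
  -- translation invariance
  have hneg : ∀ f : EuclideanSpace ℝ (Fin 2) → ℝ≥0∞, ∫⁻ y, f (-y) = ∫⁻ y, f y := by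
    intro f
    have h0 := (lintegral_map_equiv (μ := (volume : Measure (EuclideanSpace ℝ (Fin 2)))) f (MeasurableEquiv.neg (EuclideanSpace ℝ (Fin 2))))
    simp only [show ⇑(MeasurableEquiv.neg (EuclideanSpace ℝ (Fin 2))) = fun t => -t from rfl] at h0
    rw [Measure.map_neg_eq_self (volume : Measure (EuclideanSpace ℝ (Fin 2)))] at h0
    exact h0.symm
  have hk_trans : ∀ x : EuclideanSpace ℝ (Fin 2), ∫⁻ y, k (x - y) = K := by
    intro x
    have h1 : ∀ y : EuclideanSpace ℝ (Fin 2), k (x - y) = (fun t => k (x + t)) (-y) := by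
      intro y; simp [sub_eq_add_neg]
    calc ∫⁻ y, k (x - y) = ∫⁻ y, (fun t => k (x + t)) (-y) := by simp_rw [h1]
      _ = ∫⁻ y, k (x + y) := hneg (fun t => k (x + t))
      _ = K := lintegral_add_left_eq_self k x
  have hk_trans' : ∀ y : EuclideanSpace ℝ (Fin 2), ∫⁻ x, k (x - y) = K := fun y =>
    lintegral_sub_right_eq_self k y
  -- pointwise bound on the kernel
  have hker : ∀ x y : EuclideanSpace ℝ (Fin 2), ENNReal.ofReal (Real.exp (r * ‖x - z‖)) *
      ENNReal.ofReal (Real.exp (-a * ‖x - y‖) * |u y|) ≤ k (x - y) * h y := by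
    intro x y
    rw [← ENNReal.ofReal_mul (by positivity), hk_def, hh_def,
      ← ENNReal.ofReal_mul (by positivity)]
    apply ENNReal.ofReal_le_ofReal
    have h1 : r * ‖x - z‖ - r * ‖y - z‖ ≤ |r| * ‖x - y‖ := by
      have h2 : |‖x - z‖ - ‖y - z‖| ≤ ‖x - y‖ := by
        have := abs_norm_sub_norm_le (x - z) (y - z)
        simpa [sub_sub_sub_cancel_right] using this
      calc r * ‖x - z‖ - r * ‖y - z‖ = r * (‖x - z‖ - ‖y - z‖) := by ring
        _ ≤ |r * (‖x - z‖ - ‖y - z‖)| := le_abs_self _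
        _ = |r| * |‖x - z‖ - ‖y - z‖| := abs_mul _ _
        _ ≤ |r| * ‖x - y‖ := by gcongr
    calc Real.exp (r * ‖x - z‖) * (Real.exp (-a * ‖x - y‖) * |u y|)
        = Real.exp (r * ‖x - z‖ - a * ‖x - y‖) * |u y| := by
          rw [← mul_assoc, ← Real.exp_add]; ring_nf
      _ ≤ Real.exp (-(a - |r|) * ‖x - y‖ + r * ‖y - z‖) * |u y| := by
          refine mul_le_mul_of_nonneg_right (Real.exp_le_exp.2 ?_) (abs_nonneg _)
          nlinarith
      _ = Real.exp (-(a - |r|) * ‖x - y‖) * (Real.exp (r * ‖y - z‖) * |u y|) := by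
          rw [Real.exp_add]; ring
  -- main pointwise estimate
  have main : ∀ x : EuclideanSpace ℝ (Fin 2), ENNReal.ofReal (Real.exp (2 * r * ‖x - z‖)) *
      (∫⁻ y, ENNReal.ofReal (Real.exp (-a * ‖x - y‖) * |u y|)) ^ 2
      ≤ K * ∫⁻ y, k (x - y) * F y := by
    intro x
    have e1 : ENNReal.ofReal (Real.exp (2 * r * ‖x - z‖)) =
        ENNReal.ofReal (Real.exp (r * ‖x - z‖)) ^ 2 := by
      rw [← ENNReal.ofReal_pow (Real.exp_pos _).le, sq, ← Real.exp_add]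
      ring_nf
    calc ENNReal.ofReal (Real.exp (2 * r * ‖x - z‖)) *
        (∫⁻ y, ENNReal.ofReal (Real.exp (-a * ‖x - y‖) * |u y|)) ^ 2
        = (∫⁻ y, ENNReal.ofReal (Real.exp (r * ‖x - z‖)) *
            ENNReal.ofReal (Real.exp (-a * ‖x - y‖) * |u y|)) ^ 2 := by
          rw [e1, ← mul_pow, lintegral_const_mul]
          exact (((Real.continuous_exp.comp ((continuous_const.mul
            ((continuous_const.sub continuous_id).norm)))).measurable).mul hu.abs).ennreal_ofReal
      _ ≤ (∫⁻ y, k (x - y) * h y) ^ 2 :=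
          pow_le_pow_left' (lintegral_mono fun y => hker x y) 2
      _ ≤ (∫⁻ y, k (x - y)) * (∫⁻ y, k (x - y) * (h y) ^ 2) := by
          exact cs_lintegral _ _ _
            ((hk_meas.comp (measurable_const.sub measurable_id)).aemeasurable)
            hh_meas.aemeasurable
      _ = K * ∫⁻ y, k (x - y) * F y := by
          rw [hk_trans x]
          congr 1
          exact lintegral_congr fun y => by rw [hsq]
  -- integrate and use Tonelli
  have step : (∫⁻ x, ENNReal.ofReal (Real.exp (2 * r * ‖x - z‖)) *
      (∫⁻ y, ENNReal.ofReal (Real.exp (-a * ‖x - y‖) * |u y|)) ^ 2)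
      ≤ K ^ 2 * ∫⁻ y, F y := by
    calc (∫⁻ x, ENNReal.ofReal (Real.exp (2 * r * ‖x - z‖)) *
        (∫⁻ y, ENNReal.ofReal (Real.exp (-a * ‖x - y‖) * |u y|)) ^ 2)
        ≤ ∫⁻ x, K * ∫⁻ y, k (x - y) * F y := lintegral_mono main
      _ = K * ∫⁻ x, ∫⁻ y, k (x - y) * F y := by
          have hprod : Measurable fun p : EuclideanSpace ℝ (Fin 2) × EuclideanSpace ℝ (Fin 2) =>
              k (p.1 - p.2) * F p.2 :=
            (hk_meas.comp (measurable_fst.sub measurable_snd)).mul (hF_meas.comp measurable_snd)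
          rw [lintegral_const_mul]
          exact hprod.lintegral_prod_right'
      _ = K * ∫⁻ y, ∫⁻ x, k (x - y) * F y := by
          have hprod : Measurable fun p : EuclideanSpace ℝ (Fin 2) × EuclideanSpace ℝ (Fin 2) =>
              k (p.1 - p.2) * F p.2 :=
            (hk_meas.comp (measurable_fst.sub measurable_snd)).mul (hF_meas.comp measurable_snd)
          congr 1
          exact lintegral_lintegral_swap hprod.aemeasurable
      _ = K * ∫⁻ y, K * F y := by
          congr 1
          refine lintegral_congr fun y => ?_
          rw [lintegral_mul_const _ (show Measurable fun x : EuclideanSpace ℝ (Fin 2) =>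
              k (x - y) from hk_meas.comp (measurable_id.sub measurable_const)),
            hk_trans' y]
      _ = K ^ 2 * ∫⁻ y, F y := by
          rw [lintegral_const_mul _ hF_meas, sq, mul_assoc]
  calc (∫⁻ x, ENNReal.ofReal (Real.exp (2 * r * ‖x - z‖)) *
      (∫⁻ y, ENNReal.ofReal (Real.exp (-a * ‖x - y‖) * |u y|)) ^ 2) ^ ((1:ℝ)/2)
      ≤ (K ^ 2 * ∫⁻ y, F y) ^ ((1:ℝ)/2) := ENNReal.rpow_le_rpow step (by norm_num)
    _ = K * (∫⁻ y, F y) ^ ((1:ℝ)/2) := by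
        rw [ENNReal.mul_rpow_of_nonneg _ _ (by norm_num : (0:ℝ) ≤ 1/2),
          ← ENNReal.rpow_natCast K 2, ← ENNReal.rpow_mul]
        norm_num
end
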